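/- Fix real numbers m ≠ 0 and ℏ > 0. For v, w ∈ ℝ³ and t₀ ∈ ℝ define the map T_{v,w,t₀} : ℝ³ × ℝ × ℂ → ℝ³ × ℝ × ℂ by T_{v,w,t₀}(y,t,z) = ( y + v·(t + t₀) + w, t + t₀, exp((i·m/ℏ)(⟨y,v⟩ + (t/2)‖v‖²))·z ). Then for all v, v', w, w' ∈ ℝ³ and t₀, t₀' ∈ ℝ, the composition satisfies T_{v',w',t₀'} ∘ T_{v,w,t₀} (y,t,z) = T_{v+v',\; w+w'−v·t₀',\; t₀+t₀'} (y,t, z₀·z) for all (y,t,z), where z₀ = exp( (i·m/ℏ)( t₀·⟨v,v'⟩ + ⟨w,v'⟩ + (t₀/2)‖v'‖² ) ) is a constant of modulus 1 independent of (y,t,z). In particular, the family T_{v,w,t₀} satisfies the cocycle condition up to multiplication by constant phases (it is a projective cocycle). -/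

import Mathlib

open scoped BigOperators

/-- The transition map `T_{v,w,t₀}(y,t,z) =
`(y + v·(t+t₀) + w, t + t₀, exp((i·m/ℏ)(⟨y,v⟩ + (t/2)‖v‖²))·z)` of the Schrödinger
principal bundle, in coordinates. -/
noncomputable def Ttrans (m hbar : ℝ) (v w : Fin 3 → ℝ) (t0 : ℝ)
    (p : (Fin 3 → ℝ) × ℝ × ℂ) : (Fin 3 → ℝ) × ℝ × ℂ :=
  (p.1 + (p.2.1 + t0) • v + w, p.2.1 + t0,
    Complex.exp (Complex.I * m / hbar *
      (((∑ k : Fin 3, p.1 k * v k : ℝ) : ℂ)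
        + ((p.2.1 / 2 : ℝ) : ℂ) * ((∑ k : Fin 3, v k * v k : ℝ) : ℂ))) * p.2.2)

/-- The constant phase `z₀ = exp((i·m/ℏ)(t₀·⟨v,v'⟩ + ⟨w,v'⟩ + (t₀/2)‖v'‖²))`. -/
noncomputable def z0const (m hbar : ℝ) (v v' w : Fin 3 → ℝ) (t0 : ℝ) : ℂ :=
  Complex.exp (Complex.I * m / hbar *
    (((t0 * ∑ k : Fin 3, v k * v' k : ℝ) : ℂ)
      + ((∑ k : Fin 3, w k * v' k : ℝ) : ℂ)
      + ((t0 / 2 : ℝ) : ℂ) * ((∑ k : Fin 3, v' k * v' k : ℝ) : ℂ)))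

/-!
The phases of the two maps add. Boosting by `v'` after `v` evaluates `⟨·, v'⟩` at the shifted
point `y + (t + t₀)v + w`, which yields the cross term `t⟨v, v'⟩`; this is exactly the cross term of
`(t/2)‖v + v'‖²`, so what remains is a phase that does not depend on `(y, t)`.
-/

open Complex Matrix

noncomputable def galileanPhase {ι : Type*} [Fintype ι] (v y : ι → ℝ) (t : ℝ) : ℝ :=
  y ⬝ᵥ v + t / 2 * (v ⬝ᵥ v)

theorem galileanPhase_add_galileanPhase {ι : Type*} [Fintype ι]
    (v v' w y : ι → ℝ) (t t0 : ℝ) :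
    galileanPhase v' (y + (t + t0) • v + w) (t + t0) + galileanPhase v y t
      = galileanPhase (v + v') y t + (t0 * (v ⬝ᵥ v') + w ⬝ᵥ v' + t0 / 2 * (v' ⬝ᵥ v')) := by
  simp only [galileanPhase, add_dotProduct, dotProduct_add, smul_dotProduct, smul_eq_mul,
    dotProduct_comm v' v]
  ring

theorem norm_exp_I_mul_div_mul_ofReal (a b x : ℝ) : ‖exp (I * a / b * x)‖ = 1 := by
  have h : I * a / b * x = ((a / b * x : ℝ) : ℂ) * I := by push_cast; ring
  rw [h, norm_exp_ofReal_mul_I]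

theorem Ttrans_apply (m hbar : ℝ) (v w : Fin 3 → ℝ) (t0 : ℝ) (y : Fin 3 → ℝ) (t : ℝ) (z : ℂ) :
    Ttrans m hbar v w t0 (y, t, z)
      = (y + (t + t0) • v + w, t + t0, exp (I * m / hbar * galileanPhase v y t) * z) := by
  simp only [Ttrans, galileanPhase, dotProduct]
  push_cast
  rfl

theorem z0const_eq (m hbar : ℝ) (v v' w : Fin 3 → ℝ) (t0 : ℝ) :
    z0const m hbar v v' w t0
      = exp (I * m / hbar * ((t0 * (v ⬝ᵥ v') + w ⬝ᵥ v' + t0 / 2 * (v' ⬝ᵥ v') : ℝ) : ℂ)) := by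
  simp only [z0const, dotProduct]
  push_cast
  rfl

theorem Ttrans_projective_cocycle_general
    (m hbar : ℝ)
    (v v' w w' : Fin 3 → ℝ) (t0 t0' : ℝ) :
    ‖z0const m hbar v v' w t0‖ = 1 ∧
    ∀ p : (Fin 3 → ℝ) × ℝ × ℂ,
      Ttrans m hbar v' w' t0' (Ttrans m hbar v w t0 p)
      = Ttrans m hbar (v + v') (w + w' - t0' • v) (t0 + t0')
          (p.1, p.2.1, z0const m hbar v v' w t0 * p.2.2) := by
  refine ⟨by rw [z0const_eq]; exact norm_exp_I_mul_div_mul_ofReal _ _ _, ?_⟩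
  rintro ⟨y, t, z⟩
  simp only [Ttrans_apply, z0const_eq]
  refine Prod.ext (by module) (Prod.ext (by ring) ?_)
  simp only [← mul_assoc, ← exp_add, ← mul_add, ← ofReal_add]
  rw [galileanPhase_add_galileanPhase]

/-- The transition maps of the Schrödinger principal bundle form a projective cocycle:
`T_{v',w',t₀'} ∘ T_{v,w,t₀} (y,t,z) = T_{v+v', w+w'−v·t₀', t₀+t₀'} (y,t, z₀·z)`, where
`z₀ = exp((i·m/ℏ)(t₀·⟨v,v'⟩ + ⟨w,v'⟩ + (t₀/2)‖v'‖²))` is a constant of modulus `1`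
independent of `(y,t,z)`. -/
theorem Ttrans_projective_cocycle
    (m hbar : ℝ) (hm : m ≠ 0) (hh : 0 < hbar)
    (v v' w w' : Fin 3 → ℝ) (t0 t0' : ℝ) :
    ‖z0const m hbar v v' w t0‖ = 1 ∧
    ∀ p : (Fin 3 → ℝ) × ℝ × ℂ,
      Ttrans m hbar v' w' t0' (Ttrans m hbar v w t0 p)
      = Ttrans m hbar (v + v') (w + w' - t0' • v) (t0 + t0')
          (p.1, p.2.1, z0const m hbar v v' w t0 * p.2.2) :=
  Ttrans_projective_cocycle_general m hbar v v' w w' t0 t0'
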